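/- arXiv:1010.6022 — 6 statements merged into one kernel-verified Lean document; each statement's English description precedes it below -/
import Mathlib

section
/- Let κ ≥ 1 be an integer and (u_k)_{k≥0} a sequence of positive reals satisfying u_k · U_l ≤ U_{k+l+κ} for all k, l ≥ 0, where U_n = u_0 + ... + u_n. Then for all b, q, r with 0 ≤ r < b, setting m = (b+κ)q + r + κ, one has (U_m)^{1/m} ≥ (u_r)^{1/m} · (u_b)^{q/m}. -/
/-!
Iterating the hypothesis with `k = b` starting from `u_r ≤ U_{r+κ}` gives
`u_r u_b^q ≤ U_{(b+κ)q+r+κ}`, since each step adds `b + κ` to the index;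
taking `m`-th roots gives the claim.
-/

open Finset

section PartialSums

variable {κ : ℕ} {u U : ℕ → ℝ}

lemma le_partialSum_add (hu : ∀ n, 0 ≤ u n) (hU : ∀ n, U n = ∑ i ∈ range (n + 1), u i)
    (r : ℕ) : u r ≤ U (r + κ) := by
  rw [hU]
  exact single_le_sum (fun i _ => hu i) (mem_range.mpr (by omega))

lemma mul_pow_le_partialSum (hu : ∀ n, 0 ≤ u n) (hU : ∀ n, U n = ∑ i ∈ range (n + 1), u i)
    (h : ∀ k l : ℕ, u k * U l ≤ U (k + l + κ)) (b r : ℕ) :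
    ∀ n : ℕ, u r * u b ^ n ≤ U ((b + κ) * n + r + κ)
  | 0 => by simpa using le_partialSum_add hu hU r
  | n + 1 =>
    calc u r * u b ^ (n + 1) = u b * (u r * u b ^ n) := by ring
      _ ≤ u b * U ((b + κ) * n + r + κ) :=
        mul_le_mul_of_nonneg_left (mul_pow_le_partialSum hu hU h b r n) (hu b)
      _ ≤ U (b + ((b + κ) * n + r + κ) + κ) := h _ _
      _ = U ((b + κ) * (n + 1) + r + κ) := by congr 1; ring

end PartialSums

theorem partial_sum_root_lower_bound_general
    (κ : ℕ)
    (u : ℕ → ℝ) (hpos : ∀ n, 0 < u n)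
    (U : ℕ → ℝ) (hU : ∀ n, U n = ∑ i ∈ Finset.range (n + 1), u i)
    (h : ∀ k l : ℕ, u k * U l ≤ U (k + l + κ)) :
    ∀ b q r : ℕ, r < b →
      (u r) ^ ((1 : ℝ) / ((b + κ) * q + r + κ)) *
          (u b) ^ ((q : ℝ) / ((b + κ) * q + r + κ)) ≤
        (U ((b + κ) * q + r + κ)) ^ ((1 : ℝ) / ((b + κ) * q + r + κ)) := by
  intro b q r _
  have hu : ∀ n, 0 ≤ u n := fun n => (hpos n).le
  set m : ℝ := ((b : ℝ) + κ) * q + r + κ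
  have hm : 0 ≤ 1 / m := by positivity
  have hroot : u b ^ ((q : ℝ) / m) = (u b ^ q) ^ (1 / m) := by
    rw [← Real.rpow_natCast, ← Real.rpow_mul (hu b), mul_one_div]
  rw [hroot, ← Real.mul_rpow (hu r) (pow_nonneg (hu b) q)]
  exact Real.rpow_le_rpow (mul_nonneg (hu r) (pow_nonneg (hu b) q))
    (mul_pow_le_partialSum hu hU h b r q) hm

theorem partial_sum_root_lower_bound
    (κ : ℕ) (hκ : 1 ≤ κ)
    (u : ℕ → ℝ) (hpos : ∀ n, 0 < u n)
    (U : ℕ → ℝ) (hU : ∀ n, U n = ∑ i ∈ Finset.range (n + 1), u i)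
    (h : ∀ k l : ℕ, u k * U l ≤ U (k + l + κ)) :
    ∀ b q r : ℕ, r < b →
      (u r) ^ ((1 : ℝ) / ((b + κ) * q + r + κ)) *
          (u b) ^ ((q : ℝ) / ((b + κ) * q + r + κ)) ≤
        (U ((b + κ) * q + r + κ)) ^ ((1 : ℝ) / ((b + κ) * q + r + κ)) :=
  partial_sum_root_lower_bound_general κ u hpos U hU h
end

section
/- Let κ ≥ 1 and (u_k)_{k≥0} be positive reals with u_k · U_l ≤ U_{k+l+κ} for all k, l ≥ 0 (U_n the partial sums), and suppose (U_n)^{1/n} → u. Then for every b ≥ 0, u ≥ (u_b)^{1/(b+κ)}; consequently u_b ≤ u^{b+κ} for all b. -/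
open Filter Topology

/-!
Iterating `u_b U_l ≤ U_{l+b+κ}` from `l = 0` gives `u_b^m U_0 ≤ U_{m(b+κ)}`. Taking `m`-th roots,
the left side tends to `u_b` and the right side to `u^{b+κ}`, since `U_n^{1/n} → u`.
-/

lemma pow_mul_le_of_mul_le_shift {f : ℕ → ℝ} {a : ℝ} {N : ℕ} (ha : 0 ≤ a)
    (hf : ∀ n, a * f n ≤ f (n + N)) (m : ℕ) : a ^ m * f 0 ≤ f (m * N) := by
  induction m with
  | zero => simp
  | succ m ih =>
    calc a ^ (m + 1) * f 0 = a * (a ^ m * f 0) := by ring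
      _ ≤ a * f (m * N) := mul_le_mul_of_nonneg_left ih ha
      _ ≤ f ((m + 1) * N) := by rw [add_mul, one_mul]; exact hf _

lemma tendsto_const_rpow_one_div_natCast {c : ℝ} (hc : 0 < c) :
    Tendsto (fun n : ℕ => c ^ ((1 : ℝ) / n)) atTop (𝓝 1) := by
  have h := (Real.continuousAt_const_rpow hc.ne').tendsto.comp tendsto_one_div_atTop_nhds_zero_nat
  rwa [Real.rpow_zero] at h

lemma le_of_pow_mul_le_of_tendsto_rpow {x : ℕ → ℝ} {a c L : ℝ} (ha : 0 ≤ a) (hc : 0 < c)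
    (hle : ∀ n, a ^ n * c ≤ x n)
    (hx : Tendsto (fun n : ℕ => x n ^ ((1 : ℝ) / n)) atTop (𝓝 L)) : a ≤ L := by
  have hlower : Tendsto (fun n : ℕ => a * c ^ ((1 : ℝ) / n)) atTop (𝓝 a) := by
    simpa using (tendsto_const_rpow_one_div_natCast hc).const_mul a
  refine le_of_tendsto_of_tendsto hlower hx ?_
  filter_upwards [eventually_ne_atTop 0] with n hn
  calc a * c ^ ((1 : ℝ) / n) = (a ^ n * c) ^ ((1 : ℝ) / n) := by
        rw [Real.mul_rpow (by positivity) hc.le, one_div, Real.pow_rpow_inv_natCast ha hn]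
    _ ≤ x n ^ ((1 : ℝ) / n) := Real.rpow_le_rpow (by positivity) (hle n) (by positivity)

lemma tendsto_rpow_one_div_mul_of_tendsto {x : ℕ → ℝ} {L : ℝ} (hx0 : ∀ n, 0 ≤ x n)
    (hx : Tendsto (fun n : ℕ => x n ^ ((1 : ℝ) / n)) atTop (𝓝 L)) {N : ℕ} (hN : 0 < N) :
    Tendsto (fun m : ℕ => x (m * N) ^ ((1 : ℝ) / m)) atTop (𝓝 (L ^ N)) := by
  have hsub := ((continuous_pow N).tendsto L).comp
    (hx.comp (tendsto_id.atTop_mul_const' hN))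
  refine hsub.congr fun m => ?_
  simp only [Function.comp_apply, id]
  rw [← Real.rpow_natCast, ← Real.rpow_mul (hx0 _)]
  rcases Nat.eq_zero_or_pos m with rfl | hm
  · simp
  · congr 1
    push_cast
    field_simp

theorem term_bounded_by_limit_power_general
    (κ : ℕ) (hκ : 1 ≤ κ)
    (u : ℕ → ℝ) (hpos : ∀ n, 0 < u n)
    (U : ℕ → ℝ) (hU : ∀ n, U n = ∑ i ∈ Finset.range (n + 1), u i)
    (h : ∀ k l : ℕ, u k * U l ≤ U (k + l + κ))
    (v : ℝ)
    (hlim : Filter.Tendsto (fun n : ℕ => (U n) ^ ((1 : ℝ) / n)) Filter.atTop (nhds v)) :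
    ∀ b : ℕ, (u b) ^ ((1 : ℝ) / (b + κ)) ≤ v ∧ u b ≤ v ^ (b + κ) := by
  intro b
  have hN : 0 < b + κ := by omega
  have hU0 : ∀ n, 0 ≤ U n := fun n => by
    rw [hU]; exact Finset.sum_nonneg fun i _ => (hpos i).le
  have hv : 0 ≤ v := ge_of_tendsto' hlim fun n => Real.rpow_nonneg (hU0 n) _
  have hiter : ∀ m, u b ^ m * U 0 ≤ U (m * (b + κ)) :=
    pow_mul_le_of_mul_le_shift (hpos b).le fun l => by
      rw [show l + (b + κ) = b + l + κ by ring]; exact h b l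
  have hbound : u b ≤ v ^ (b + κ) :=
    le_of_pow_mul_le_of_tendsto_rpow (hpos b).le (by simp [hU, hpos]) hiter
      (tendsto_rpow_one_div_mul_of_tendsto hU0 hlim hN)
  refine ⟨?_, hbound⟩
  rw [one_div, Real.rpow_inv_le_iff_of_pos (hpos b).le hv (by positivity)]
  exact_mod_cast hbound

theorem term_bounded_by_limit_power
    (κ : ℕ) (hκ : 1 ≤ κ)
    (u : ℕ → ℝ) (hpos : ∀ n, 0 < u n)
    (U : ℕ → ℝ) (hU : ∀ n, U n = ∑ i ∈ Finset.range (n + 1), u i)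
    (h : ∀ k l : ℕ, u k * U l ≤ U (k + l + κ))
    (v : ℝ) (hv : 1 ≤ v)
    (hlim : Filter.Tendsto (fun n : ℕ => (U n) ^ ((1 : ℝ) / n)) Filter.atTop (nhds v)) :
    ∀ b : ℕ, (u b) ^ ((1 : ℝ) / (b + κ)) ≤ v ∧ u b ≤ v ^ (b + κ) :=
  term_bounded_by_limit_power_general κ hκ u hpos U hU h v hlim
end

section
/- Let (w_n)_{n≥1} be nonnegative reals satisfying w_{n+m} ≤ W_n · W_m for all n, m ≥ 1, where W_n = w_1 + ... + w_n. Set 𝑊̃_n = 1 + W_1 + ... + W_n. Then W_{n+m} ≤ W_n · 𝑊̃_m and 𝑊̃_{n+m} ≤ 𝑊̃_n · 𝑊̃_m for all n, m ≥ 1; in particular (log 𝑊̃_n) is subadditive and (1/n) log 𝑊̃_n converges to L := inf_{n≥1} (1/n) log 𝑊̃_n. -/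
open Filter Finset

/-!
The increments telescope: `W (n+m+1) - W (n+m) = w (n+m+1) ≤ W n * W (m+1)
= W n * (Wt (m+1) - Wt m)`, so induction on `m` from `Wt 0 = 1` gives `W (n+m) ≤ W n * Wt m`.
With `n` and `m` swapped this bounds the increments of `Wt`, and the same telescoping gives
`Wt (n+m) ≤ Wt n * Wt m` for all `n, m`. Hence `log Wt` is subadditive and nonnegative, and
Fekete's lemma applies.
-/

theorem Subadditive.lim_eq_iInf_succ {u : ℕ → ℝ} (h : Subadditive u) :
    h.lim = ⨅ n : ℕ, u (n + 1) / (n + 1) := by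
  have hIci : Set.Ici 1 = Set.range (· + 1) := by
    ext n; simp [Nat.one_le_iff_ne_zero]
  rw [Subadditive.lim, hIci, ← Set.range_comp, sInf_range]
  simp only [Function.comp_def, Nat.cast_add, Nat.cast_one]

theorem subadditive_log_of_submultiplicative {v : ℕ → ℝ} (hpos : ∀ n, 0 < v n)
    (hmul : ∀ n m, v (n + m) ≤ v n * v m) : Subadditive fun n => Real.log (v n) := by
  intro n m
  calc Real.log (v (n + m)) ≤ Real.log (v n * v m) := Real.log_le_log (hpos _) (hmul n m)
    _ = Real.log (v n) + Real.log (v m) := Real.log_mul (hpos n).ne' (hpos m).ne'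

theorem tendsto_log_div_of_submultiplicative {v : ℕ → ℝ} (hv : ∀ n, 1 ≤ v n)
    (hmul : ∀ n m, v (n + m) ≤ v n * v m) :
    Tendsto (fun n : ℕ => Real.log (v n) / n) atTop
      (nhds (⨅ n : ℕ, Real.log (v (n + 1)) / (n + 1))) := by
  have hsub := subadditive_log_of_submultiplicative (fun n => one_pos.trans_le (hv n)) hmul
  have hbdd : BddBelow (Set.range fun n : ℕ => Real.log (v n) / n) :=
    ⟨0, Set.forall_mem_range.2 fun n => div_nonneg (Real.log_nonneg (hv n)) n.cast_nonneg⟩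
  simpa only [hsub.lim_eq_iInf_succ] using hsub.tendsto_lim hbdd

theorem W_add_le_W_mul_Wt {w W Wt : ℕ → ℝ} (hW : ∀ k, W (k + 1) = W k + w (k + 1))
    (hWt : ∀ k, Wt (k + 1) = Wt k + W (k + 1)) (hWt0 : Wt 0 = 1)
    (h : ∀ n m, 1 ≤ n → 1 ≤ m → w (n + m) ≤ W n * W m) {n : ℕ} (hn : 1 ≤ n) (m : ℕ) :
    W (n + m) ≤ W n * Wt m := by
  induction m with
  | zero => simp [hWt0]
  | succ m ih =>
    calc W (n + (m + 1)) = W (n + m) + w (n + (m + 1)) := hW (n + m)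
      _ ≤ W n * Wt m + W n * W (m + 1) := add_le_add ih (h n (m + 1) hn m.succ_pos)
      _ = W n * Wt (m + 1) := by rw [hWt, mul_add]

theorem Wt_add_le_Wt_mul_Wt {w W Wt : ℕ → ℝ} (hW : ∀ k, W (k + 1) = W k + w (k + 1))
    (hWt : ∀ k, Wt (k + 1) = Wt k + W (k + 1)) (hWt0 : Wt 0 = 1)
    (h : ∀ n m, 1 ≤ n → 1 ≤ m → w (n + m) ≤ W n * W m) (n m : ℕ) :
    Wt (n + m) ≤ Wt n * Wt m := by
  induction m with
  | zero => simp [hWt0]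
  | succ m ih =>
    have hW_le : W (n + (m + 1)) ≤ Wt n * W (m + 1) := by
      rw [add_comm n, mul_comm]
      exact W_add_le_W_mul_Wt hW hWt hWt0 h m.succ_pos n
    calc Wt (n + (m + 1)) = Wt (n + m) + W (n + (m + 1)) := hWt (n + m)
      _ ≤ Wt n * Wt m + Wt n * W (m + 1) := add_le_add ih hW_le
      _ = Wt n * Wt (m + 1) := by rw [hWt, mul_add]

theorem tilde_W_submultiplicative_and_fekete
    (w : ℕ → ℝ) (hw : ∀ n, 0 ≤ w n)
    (W : ℕ → ℝ) (hW : ∀ n, W n = ∑ k ∈ Finset.Icc 1 n, w k)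
    (Wt : ℕ → ℝ) (hWt : ∀ n, Wt n = 1 + ∑ k ∈ Finset.Icc 1 n, W k)
    (h : ∀ n m, 1 ≤ n → 1 ≤ m → w (n + m) ≤ W n * W m) :
    (∀ n m, 1 ≤ n → 1 ≤ m →
        W (n + m) ≤ W n * Wt m ∧ Wt (n + m) ≤ Wt n * Wt m) ∧
      Filter.Tendsto (fun n : ℕ => Real.log (Wt n) / n) Filter.atTop
        (nhds (⨅ n : ℕ, Real.log (Wt (n + 1)) / (n + 1))) := by
  have hW_succ : ∀ k, W (k + 1) = W k + w (k + 1) := fun k => by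
    rw [hW, hW, sum_Icc_succ_top (Nat.le_add_left 1 k)]
  have hWt_succ : ∀ k, Wt (k + 1) = Wt k + W (k + 1) := fun k => by
    rw [hWt, hWt, sum_Icc_succ_top (Nat.le_add_left 1 k), add_assoc]
  have hWt0 : Wt 0 = 1 := by simp [hWt]
  have hWt_mul := Wt_add_le_Wt_mul_Wt hW_succ hWt_succ hWt0 h
  have one_le_Wt : ∀ n, 1 ≤ Wt n := fun n => by
    rw [hWt]
    exact le_add_of_nonneg_right <| sum_nonneg fun k _ => by
      rw [hW]; exact sum_nonneg fun j _ => hw j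
  exact ⟨fun n m hn _ => ⟨W_add_le_W_mul_Wt hW_succ hWt_succ hWt0 h hn m, hWt_mul n m⟩,
    tendsto_log_div_of_submultiplicative one_le_Wt hWt_mul⟩
end

section
/- Let (w_n)_{n≥1} be nonnegative reals with w_{n+m} ≤ W_n · W_m for all n, m ≥ 1 (W_n the partial sums). If limsup (1/n) log w_n > 0, then the series ∑_{n≥1} w_n e^{-sn} diverges at its critical exponent s = limsup (1/n) log w_n. -/
open Filter Finset

/-!
Put `r = e^{-s}` and `B_m = 1 + W_1 + ⋯ + W_m`. Iterating the hypothesis gives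
`W_{n+q} ≤ W_n B_q`, so `W_n ≤ W_m B_m^{⌊n/m⌋}`; hence `s ≤ (log B_m) / m`, i.e. `r^m B_m ≥ 1`,
for every `m ≥ 1`. On the other hand, if `∑ w_n r^n` converged, then so would `∑ W_n r^n` and
`∑ (W_1 + ⋯ + W_n) r^n`, each being dominated by a Cauchy product with the geometric series;
so `r^m B_m → 0`.
-/

def partialSum (w : ℕ → ℝ) (n : ℕ) : ℝ := ∑ k ∈ Icc 1 n, w k

section PartialSum

variable {w : ℕ → ℝ}

lemma partialSum_succ (n : ℕ) : partialSum w (n + 1) = partialSum w n + w (n + 1) :=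
  sum_Icc_succ_top (Nat.le_add_left 1 n) w

lemma partialSum_nonneg (hw : ∀ n, 0 ≤ w n) (n : ℕ) : 0 ≤ partialSum w n :=
  sum_nonneg fun k _ => hw k

lemma partialSum_mono (hw : ∀ n, 0 ≤ w n) : Monotone (partialSum w) := fun _ _ hab =>
  sum_le_sum_of_subset_of_nonneg (Icc_subset_Icc le_rfl hab) fun k _ _ => hw k

lemma le_partialSum (hw : ∀ n, 0 ≤ w n) {n : ℕ} (hn : 1 ≤ n) : w n ≤ partialSum w n :=
  single_le_sum (fun k _ => hw k) (mem_Icc.2 ⟨hn, le_rfl⟩)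

lemma partialSum_mul_pow_le (hw : ∀ n, 0 ≤ w n) {r : ℝ} (hr : 0 ≤ r) (n : ℕ) :
    partialSum w n * r ^ n ≤ ∑ k ∈ range (n + 1), w k * r ^ k * r ^ (n - k) := by
  calc partialSum w n * r ^ n = ∑ k ∈ Icc 1 n, w k * r ^ k * r ^ (n - k) := by
        rw [partialSum, sum_mul]
        refine sum_congr rfl fun k hk => ?_
        rw [mul_assoc, ← pow_add, Nat.add_sub_cancel' (mem_Icc.1 hk).2]
    _ ≤ ∑ k ∈ range (n + 1), w k * r ^ k * r ^ (n - k) :=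
        sum_le_sum_of_subset_of_nonneg
          (fun k hk => mem_range.2 (Nat.lt_succ_of_le (mem_Icc.1 hk).2))
          fun k _ _ => mul_nonneg (mul_nonneg (hw k) (pow_nonneg hr _)) (pow_nonneg hr _)

lemma summable_partialSum_mul_pow (hw : ∀ n, 0 ≤ w n) {r : ℝ} (hr0 : 0 ≤ r) (hr1 : r < 1)
    (hsum : Summable fun n => w n * r ^ n) : Summable fun n => partialSum w n * r ^ n := by
  have hcauchy : Summable fun n => ∑ k ∈ range (n + 1), w k * r ^ k * r ^ (n - k) :=
    summable_sum_mul_range_of_summable_mul (f := fun n => w n * r ^ n) (g := (r ^ ·)) <|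
      hsum.mul_of_nonneg (summable_geometric_of_lt_one hr0 hr1)
        (fun n => mul_nonneg (hw n) (pow_nonneg hr0 n)) (fun n => pow_nonneg hr0 n)
  exact hcauchy.of_nonneg_of_le (fun n => mul_nonneg (partialSum_nonneg hw n) (pow_nonneg hr0 n))
    (partialSum_mul_pow_le hw hr0)

lemma partialSum_add_le (h : ∀ n m, 1 ≤ n → 1 ≤ m → w (n + m) ≤ partialSum w n * partialSum w m)
    {n : ℕ} (hn : 1 ≤ n) (q : ℕ) :
    partialSum w (n + q) ≤ partialSum w n * (1 + partialSum (partialSum w) q) := by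
  induction q with
  | zero => simp [partialSum]
  | succ q ih =>
    calc partialSum w (n + (q + 1)) = partialSum w (n + q) + w (n + (q + 1)) :=
          partialSum_succ (n + q)
      _ ≤ partialSum w n * (1 + partialSum (partialSum w) q)
            + partialSum w n * partialSum w (q + 1) :=
          add_le_add ih (h n (q + 1) hn (Nat.le_add_left 1 q))
      _ = partialSum w n * (1 + partialSum (partialSum w) (q + 1)) := by
          rw [partialSum_succ (w := partialSum w) q]; ring

lemma partialSum_mul_le_pow (hw : ∀ n, 0 ≤ w n)
    (h : ∀ n m, 1 ≤ n → 1 ≤ m → w (n + m) ≤ partialSum w n * partialSum w m)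
    {m : ℕ} (hm : 1 ≤ m) (k : ℕ) :
    partialSum w ((k + 1) * m) ≤ partialSum w m * (1 + partialSum (partialSum w) m) ^ k := by
  induction k with
  | zero => simp
  | succ k ih =>
    have hB : 0 ≤ 1 + partialSum (partialSum w) m :=
      add_nonneg zero_le_one (partialSum_nonneg (partialSum_nonneg hw) m)
    calc partialSum w ((k + 1 + 1) * m) = partialSum w ((k + 1) * m + m) := by ring_nf
      _ ≤ partialSum w ((k + 1) * m) * (1 + partialSum (partialSum w) m) :=
          partialSum_add_le h (Nat.one_le_iff_ne_zero.2 (by positivity)) m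
      _ ≤ partialSum w m * (1 + partialSum (partialSum w) m) ^ k
            * (1 + partialSum (partialSum w) m) := mul_le_mul_of_nonneg_right ih hB
      _ = partialSum w m * (1 + partialSum (partialSum w) m) ^ (k + 1) := by ring

lemma le_partialSum_mul_pow_div (hw : ∀ n, 0 ≤ w n)
    (h : ∀ n m, 1 ≤ n → 1 ≤ m → w (n + m) ≤ partialSum w n * partialSum w m)
    {m N : ℕ} (hm : 1 ≤ m) (hN : 1 ≤ N) :
    w N ≤ partialSum w m * (1 + partialSum (partialSum w) m) ^ (N / m) :=
  calc w N ≤ partialSum w N := le_partialSum hw hN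
    _ ≤ partialSum w ((N / m + 1) * m) :=
        partialSum_mono hw (by rw [add_mul, one_mul]; exact (Nat.lt_div_mul_add hm).le)
    _ ≤ partialSum w m * (1 + partialSum (partialSum w) m) ^ (N / m) :=
        partialSum_mul_le_pow hw h hm (N / m)

lemma exists_pow_mul_lt_one (hw : ∀ n, 0 ≤ w n) {r : ℝ} (hr0 : 0 ≤ r) (hr1 : r < 1)
    (hsum : Summable fun n => w n * r ^ n) :
    ∃ m, 1 ≤ m ∧ r ^ m * (1 + partialSum (partialSum w) m) < 1 := by
  have hV := summable_partialSum_mul_pow (partialSum_nonneg hw) hr0 hr1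
    (summable_partialSum_mul_pow hw hr0 hr1 hsum)
  have hsmall : Tendsto (fun m => r ^ m * (1 + partialSum (partialSum w) m)) atTop (nhds 0) := by
    simpa using ((tendsto_pow_atTop_nhds_zero_of_lt_one hr0 hr1).add
      hV.tendsto_atTop_zero).congr fun m => by ring
  exact ((eventually_ge_atTop 1).and (hsmall.eventually_lt_const one_pos)).exists

end PartialSum

lemma eventually_log_div_lt {w : ℕ → ℝ} (hw : ∀ n, 0 ≤ w n) {C B b : ℝ} {m : ℕ} (hm : 0 < m)
    (hB : 1 ≤ B) (hbound : ∀ N, 1 ≤ N → w N ≤ C * B ^ (N / m)) (hb : Real.log B / m < b) :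
    ∀ᶠ N : ℕ in atTop, Real.log (w N) / N < b := by
  have hlim : Tendsto (fun N : ℕ => Real.log C / N + Real.log B / m) atTop
      (nhds (Real.log B / m)) := by
    simpa using (tendsto_const_div_atTop_nhds_zero_nat (Real.log C)).add_const (Real.log B / m)
  filter_upwards [hlim.eventually_lt_const hb, eventually_ge_atTop 1] with N hNb hN
  have hN0 : (0 : ℝ) < N := by exact_mod_cast hN
  have hlogB : 0 ≤ Real.log B := Real.log_nonneg hB
  rcases (hw N).eq_or_lt with hzero | hpos
  · rw [← hzero, Real.log_zero, zero_div]
    exact (div_nonneg hlogB (Nat.cast_nonneg m)).trans_lt hb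
  have hC : 0 < C := pos_of_mul_pos_left (hpos.trans_le (hbound N hN)) (by positivity)
  have hlog : Real.log (w N) ≤ Real.log C + (N / m : ℕ) * Real.log B := by
    calc Real.log (w N) ≤ Real.log (C * B ^ (N / m)) := Real.log_le_log hpos (hbound N hN)
      _ = Real.log C + (N / m : ℕ) * Real.log B := by
          rw [Real.log_mul hC.ne' (by positivity), Real.log_pow]
  have hfloor : ((N / m : ℕ) : ℝ) * Real.log B ≤ N * (Real.log B / m) := by
    calc ((N / m : ℕ) : ℝ) * Real.log B ≤ (N / m : ℝ) * Real.log B :=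
          mul_le_mul_of_nonneg_right Nat.cast_div_le hlogB
      _ = N * (Real.log B / m) := by ring
  calc Real.log (w N) / N ≤ (Real.log C + N * (Real.log B / m)) / N := by gcongr; linarith
    _ = Real.log C / N + Real.log B / m := by field_simp
    _ < b := hNb

lemma frequently_lt_of_lt_limsup_of_ne_zero {α : Type*} {f : Filter α} {u : α → ℝ} {b : ℝ}
    (h0 : limsup u f ≠ 0) (hb : b < limsup u f) : ∃ᶠ x in f, b < u x :=
  frequently_lt_of_lt_limsup (not_imp_comm.1 Real.limsup_of_not_isCoboundedUnder h0) hb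

theorem divergence_at_critical_exponent
    (w : ℕ → ℝ) (hw : ∀ n, 0 ≤ w n)
    (W : ℕ → ℝ) (hW : ∀ n, W n = ∑ k ∈ Finset.Icc 1 n, w k)
    (h : ∀ n m, 1 ≤ n → 1 ≤ m → w (n + m) ≤ W n * W m)
    (s : ℝ) (hs : s = Filter.limsup (fun n : ℕ => Real.log (w n) / n) Filter.atTop)
    (hspos : 0 < s) :
    ¬ Summable (fun n : ℕ => w n * Real.exp (-s * n)) := by
  intro hsum
  obtain rfl : W = partialSum w := funext hW
  set r := Real.exp (-s)
  have hr0 : 0 < r := Real.exp_pos _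
  have hr1 : r < 1 := Real.exp_lt_one_iff.2 (neg_lt_zero.2 hspos)
  have hpow : ∀ n : ℕ, r ^ n = Real.exp (-s * n) := fun n => by
    rw [← Real.exp_nat_mul]; ring_nf
  have hsum' : Summable fun n => w n * r ^ n := by simpa only [hpow] using hsum
  obtain ⟨m, hm, hBm⟩ := exists_pow_mul_lt_one hw hr0.le hr1 hsum'
  set B := 1 + partialSum (partialSum w) m
  have hB : 1 ≤ B := le_add_of_nonneg_right (partialSum_nonneg (partialSum_nonneg hw) m)
  have hlogB : Real.log B / m < s := by
    have hrm : r ^ m * Real.exp (s * m) = 1 := by rw [hpow, ← Real.exp_add]; simp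
    have hBexp : B < Real.exp (s * m) :=
      lt_of_mul_lt_mul_left (hBm.trans_eq hrm.symm) (pow_nonneg hr0.le m)
    rw [div_lt_iff₀ (by exact_mod_cast hm)]
    exact (Real.log_lt_iff_lt_exp (by linarith)).2 hBexp
  obtain ⟨b, hBb, hbs⟩ := exists_between hlogB
  have hev := eventually_log_div_lt hw hm hB (fun N hN => le_partialSum_mul_pow_div hw h hm hN) hBb
  have hfreq := frequently_lt_of_lt_limsup_of_ne_zero (hs ▸ hspos.ne') (hs ▸ hbs)
  obtain ⟨N, hbN, hNb⟩ := (hfreq.and_eventually hev).exists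
  exact lt_asymm hbN hNb
end

section
/- For a countable family (d_i) of nonnegative reals with counting function N(R) = #{ i : d_i ≤ R } finite for all R, the critical exponent of the series ∑_i e^{-s d_i} equals limsup_{R→∞} (1/R) log N(R). -/
/-!
If `∑ e^{-s d_i} = C < ∞` with `s ≥ 0`, Markov's inequality gives `N(R) ≤ C e^{sR}`, so the
growth rate of `N` is at most `s`. Conversely, if `N(R) ≤ e^{s'R}` for large `R` and `s' < s`,
grouping the indices by `⌊d_i⌋` bounds the series by `∑ₙ N(n+1) e^{-sn} ≲ ∑ₙ e^{(s'-s)n} < ∞`.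
-/

open Filter Real Topology

noncomputable def upperExpGrowth (N : ℝ → ℕ) : EReal :=
  limsup (fun R : ℝ => ((log (N R) / R : ℝ) : EReal)) atTop

theorem upperExpGrowth_nonneg (N : ℝ → ℕ) : 0 ≤ upperExpGrowth N := by
  refine le_limsup_of_frequently_le ((eventually_gt_atTop 0).mono fun R hR => ?_).frequently
  exact EReal.coe_nonneg.2 (div_nonneg (log_natCast_nonneg _) hR.le)

theorem upperExpGrowth_le_of_le_mul_exp {N : ℝ → ℕ} {C s : ℝ} (hs : 0 ≤ s)
    (hN : ∀ R, (N R : ℝ) ≤ C * exp (s * R)) : upperExpGrowth N ≤ s := by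
  set C' := max C 1
  have hlog : ∀ R, 0 ≤ R → log (N R) ≤ log C' + s * R := by
    intro R hR
    rcases Nat.eq_zero_or_pos (N R) with h0 | hpos
    · rw [h0, Nat.cast_zero, log_zero]
      exact add_nonneg (log_nonneg (le_max_right _ _)) (mul_nonneg hs hR)
    · rw [log_le_iff_le_exp (by exact_mod_cast hpos), exp_add, exp_log (by positivity)]
      exact (hN R).trans (by gcongr; exact le_max_left _ _)
  have hbound : ∀ᶠ R : ℝ in atTop,
      ((log (N R) / R : ℝ) : EReal) ≤ ((log C' / R + s : ℝ) : EReal) := by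
    filter_upwards [eventually_gt_atTop 0] with R hR
    rw [EReal.coe_le_coe_iff, div_add' _ _ _ hR.ne', div_le_div_iff_of_pos_right hR]
    exact hlog R hR.le
  have hlim : Tendsto (fun R : ℝ => ((log C' / R + s : ℝ) : EReal)) atTop (𝓝 s) := by
    rw [EReal.tendsto_coe]
    simpa using (tendsto_const_nhds.div_atTop tendsto_id).add_const s
  exact (limsup_le_limsup hbound).trans_eq hlim.limsup_eq

theorem eventually_le_exp_of_upperExpGrowth_lt {N : ℝ → ℕ} {s : ℝ} (h : upperExpGrowth N < s) :
    ∀ᶠ R in atTop, (N R : ℝ) ≤ exp (s * R) := by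
  filter_upwards [eventually_lt_of_limsup_lt h, eventually_gt_atTop 0] with R hlt hR
  have : log (N R) < s * R := (div_lt_iff₀ hR).1 (EReal.coe_lt_coe_iff.1 hlt)
  exact (le_exp_log _).trans (exp_le_exp.2 this.le)

section Family

variable {I : Type*} (d : I → ℝ)

theorem natCard_le_tsum_mul_exp {s : ℝ} (hs : 0 ≤ s) (hsum : Summable fun i => exp (-s * d i))
    (R : ℝ) : (Nat.card {i // d i ≤ R} : ℝ) ≤ (∑' i, exp (-s * d i)) * exp (s * R) := by
  rcases finite_or_infinite {i // d i ≤ R} with hfin | hinf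
  · rw [← div_le_iff₀ (exp_pos _), div_eq_mul_inv, ← exp_neg, ← neg_mul]
    calc (Nat.card {i // d i ≤ R} : ℝ) * exp (-s * R)
        = ∑' _ : {i // d i ≤ R}, exp (-s * R) := by rw [tsum_const, nsmul_eq_mul]
      _ ≤ ∑' i : {i // d i ≤ R}, exp (-s * d i) :=
          Summable.tsum_le_tsum (fun i => exp_le_exp.2 (by nlinarith [i.2]))
            Summable.of_finite Summable.of_finite
      _ ≤ ∑' i, exp (-s * d i) := hsum.tsum_subtype_le _ {i | d i ≤ R} fun _ => (exp_pos _).le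
  · rw [Nat.card_eq_zero_of_infinite, Nat.cast_zero]
    exact mul_nonneg (tsum_nonneg fun _ => (exp_pos _).le) (exp_pos _).le

theorem setOf_natFloor_eq_subset (n : ℕ) : {i | ⌊d i⌋₊ = n} ⊆ {i | d i ≤ n + 1} :=
  fun i hi => (hi ▸ Nat.lt_floor_add_one (d i)).le

variable {d}

theorem tsum_exp_neg_mul_floor_shell_le (hd : ∀ i, 0 ≤ d i)
    (hfin : ∀ R : ℝ, {i | d i ≤ R}.Finite) {s : ℝ} (hs : 0 ≤ s) (n : ℕ) :
    ∑' i : {i | ⌊d i⌋₊ = n}, exp (-s * d i) ≤ Nat.card {i // d i ≤ n + 1} * exp (-s * n) := by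
  have : Finite {i | ⌊d i⌋₊ = n} := ((hfin _).subset (setOf_natFloor_eq_subset d n)).to_subtype
  calc ∑' i : {i | ⌊d i⌋₊ = n}, exp (-s * d i)
      ≤ ∑' _ : {i | ⌊d i⌋₊ = n}, exp (-s * n) :=
        Summable.tsum_le_tsum (fun i => exp_le_exp.2 (by
          have hn : (n : ℝ) ≤ d i := (Nat.le_floor_iff (hd i)).1 i.2.ge
          nlinarith)) Summable.of_finite Summable.of_finite
    _ = Nat.card {i | ⌊d i⌋₊ = n} * exp (-s * n) := by rw [tsum_const, nsmul_eq_mul]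
    _ ≤ Nat.card {i // d i ≤ n + 1} * exp (-s * n) := by
        gcongr
        exact Nat.card_mono (hfin _) (setOf_natFloor_eq_subset d n)

theorem summable_exp_neg_mul_of_eventually_card_le (hd : ∀ i, 0 ≤ d i)
    (hfin : ∀ R : ℝ, {i | d i ≤ R}.Finite) {s' s : ℝ} (hs : 0 ≤ s) (hs's : s' < s)
    (hN : ∀ᶠ R in atTop, (Nat.card {i // d i ≤ R} : ℝ) ≤ exp (s' * R)) :
    Summable fun i => exp (-s * d i) := by
  have hpartition : ∀ i, ∃! n : ℕ, i ∈ {i | ⌊d i⌋₊ = n} := fun i => ⟨_, rfl, fun _ h => h.symm⟩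
  refine (summable_partition (fun i => (exp_pos _).le) hpartition).2 ⟨fun n => ?_, ?_⟩
  · have : Finite {i | ⌊d i⌋₊ = n} := ((hfin _).subset (setOf_natFloor_eq_subset d n)).to_subtype
    exact Summable.of_finite
  have hgeom : Summable fun n : ℕ => exp s' * exp (s' - s) ^ n :=
    (summable_geometric_of_lt_one (exp_pos _).le (exp_lt_one_iff.2 (by linarith))).mul_left _
  refine hgeom.of_norm_bounded_eventually_nat ?_
  filter_upwards [(tendsto_atTop_add_const_right _ 1 tendsto_natCast_atTop_atTop).eventually hN]
    with n hn
  rw [norm_of_nonneg (tsum_nonneg fun _ => (exp_pos _).le)]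
  calc ∑' i : {i | ⌊d i⌋₊ = n}, exp (-s * d i)
      ≤ Nat.card {i // d i ≤ n + 1} * exp (-s * n) := tsum_exp_neg_mul_floor_shell_le hd hfin hs n
    _ ≤ exp (s' * (n + 1)) * exp (-s * n) := by gcongr
    _ = exp s' * exp (s' - s) ^ n := by
        rw [← exp_nat_mul, ← exp_add, ← exp_add]; ring_nf

end Family

theorem critical_exponent_eq_orbital_growth_general
    (I : Type*)
    (d : I → ℝ) (hd : ∀ i, 0 ≤ d i)
    (hfin : ∀ R : ℝ, {i : I | d i ≤ R}.Finite)
    (δ : EReal)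
    (hδ : δ = sInf {s : EReal | ∃ t : ℝ, s = (t : EReal) ∧ 0 ≤ t ∧
        Summable fun i : I => Real.exp (-t * d i)}) :
    δ = Filter.limsup
        (fun R : ℝ => ((Real.log (Nat.card {i : I // d i ≤ R}) / R : ℝ) : EReal))
        Filter.atTop := by
  subst hδ
  change _ = upperExpGrowth fun R => Nat.card {i // d i ≤ R}
  refine le_antisymm (le_of_forall_gt_imp_ge_of_dense fun c hc => ?_) (le_sInf ?_)
  · obtain ⟨s', hs', hs'c⟩ := EReal.exists_between_coe_real hc
    obtain ⟨s, hs's, hsc⟩ := EReal.exists_between_coe_real hs'c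
    have hs : 0 ≤ s := EReal.coe_nonneg.1 ((upperExpGrowth_nonneg _).trans (hs'.trans hs's).le)
    have hsum : Summable fun i => exp (-s * d i) :=
      summable_exp_neg_mul_of_eventually_card_le hd hfin hs (EReal.coe_lt_coe_iff.1 hs's)
        (eventually_le_exp_of_upperExpGrowth_lt hs')
    exact le_trans (sInf_le ⟨s, rfl, hs, hsum⟩) hsc.le
  · rintro _ ⟨t, rfl, ht, hsum⟩
    exact upperExpGrowth_le_of_le_mul_exp ht (natCard_le_tsum_mul_exp d ht hsum)

theorem critical_exponent_eq_orbital_growth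
    (I : Type*) [Countable I]
    (d : I → ℝ) (hd : ∀ i, 0 ≤ d i)
    (hfin : ∀ R : ℝ, {i : I | d i ≤ R}.Finite)
    (δ : EReal)
    (hδ : δ = sInf {s : EReal | ∃ t : ℝ, s = (t : EReal) ∧ 0 ≤ t ∧
        Summable fun i : I => Real.exp (-t * d i)}) :
    δ = Filter.limsup
        (fun R : ℝ => ((Real.log (Nat.card {i : I // d i ≤ R}) / R : ℝ) : EReal))
        Filter.atTop :=
  critical_exponent_eq_orbital_growth_general I d hd hfin δ hδ
end

section
/- Let G be a group acting by isometries on a metric space X with basepoint o, and let H ≤ G, g ∈ G. Suppose every reduced word h_1 g h_2 g ⋯ h_k g (k ≥ 1, h_i ∈ H \ {1}) gives a distinct element of G, and that the triangle inequality gives d(o, h_1 g ⋯ h_k g · o) ≤ ∑_{i=1}^k ( d(o, h_i·o) + d(o, g·o) ). Then for every s ≥ 0, ∑_{γ∈G} e^{-s d(o, γ·o)} ≥ ∑_{k≥1} ( e^{-s d(o, g·o)} · ∑_{h∈H\{1}} e^{-s d(o, h·o)} )^k. -/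
/-!
Reduced words h₁g⋯h_kg embed injectively into `G`, so the Poincaré series of `G` dominates the
sum over reduced words. By the triangle inequality the term of a word is at least
`∏ᵢ e^{-s(d(o,hᵢo) + d(o,go))}`, and these products summed over words of length `k` give the
`k`-th power of the one-letter sum.
-/

open scoped ENNReal

namespace ENNReal

theorem tsum_fin_pi_prod {n : ℕ} {α : Fin n → Type*} (w : (i : Fin n) → α i → ℝ≥0∞) :
    ∑' f : (i : Fin n) → α i, ∏ i, w i (f i) = ∏ i, ∑' a, w i a := by
  induction n with
  | zero => simp
  | succ n ih =>
    rw [← (Fin.consEquiv α).tsum_eq, ENNReal.tsum_prod', Fin.prod_univ_succ,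
      ← ih, ← ENNReal.tsum_mul_right]
    refine tsum_congr fun a => ?_
    simp only [Fin.consEquiv_apply, Fin.prod_univ_succ, Fin.cons_zero, Fin.cons_succ]
    exact ENNReal.tsum_mul_left

theorem tsum_subtype_fin_pi_prod_eq_pow {α : Type*} (p : α → Prop) (w : Subtype p → ℝ≥0∞)
    (n : ℕ) :
    ∑' f : {f : Fin n → α // ∀ i, p (f i)}, ∏ i, w ⟨f.1 i, f.2 i⟩ = (∑' a, w a) ^ n := by
  rw [← (Equiv.subtypePiEquivPi (p := fun _ => p)).symm.tsum_eq, ← Fin.prod_const,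
    ← tsum_fin_pi_prod]
  rfl

theorem prod_ofReal_exp_neg_mul_le {ι : Type*} (t : Finset ι) (c : ι → ℝ) {s d : ℝ}
    (hs : 0 ≤ s) (hd : d ≤ ∑ i ∈ t, c i) :
    ∏ i ∈ t, ENNReal.ofReal (Real.exp (-s * c i)) ≤ ENNReal.ofReal (Real.exp (-s * d)) := by
  rw [← ENNReal.ofReal_prod_of_nonneg fun i _ => (Real.exp_pos _).le, ← Real.exp_sum,
    ← Finset.mul_sum]
  simp only [neg_mul]
  gcongr

end ENNReal

theorem poincare_series_free_product_lower_bound_general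
    (G : Type*) [Group G] (X : Type*) [MetricSpace X]
    [MulAction G X]
    (o : X) (H : Subgroup G) (g : G)
    (hinj : Function.Injective
      (fun p : Σ k : ℕ, {f : Fin (k + 1) → H // ∀ i, f i ≠ 1} =>
        (List.ofFn (fun i => ((p.2.1 i : G) * g))).prod))
    (htri : ∀ (k : ℕ) (f : Fin (k + 1) → H),
      dist o ((List.ofFn (fun i => ((f i : G) * g))).prod • o) ≤
        ∑ i : Fin (k + 1), (dist o ((f i : G) • o) + dist o (g • o))) :
    ∀ s : ℝ, 0 ≤ s →
      ∑' k : ℕ,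
          (ENNReal.ofReal (Real.exp (-s * dist o (g • o))) *
            ∑' h : {h : H // h ≠ 1},
              ENNReal.ofReal (Real.exp (-s * dist o ((h : G) • o)))) ^ (k + 1)
        ≤ ∑' γ : G, ENNReal.ofReal (Real.exp (-s * dist o (γ • o))) := by
  intro s hs
  set w : G → ℝ≥0∞ := fun γ => ENNReal.ofReal (Real.exp (-s * dist o (γ • o)))
  set u : {h : H // h ≠ 1} → ℝ≥0∞ := fun h =>
    ENNReal.ofReal (Real.exp (-s * (dist o ((h : G) • o) + dist o (g • o))))
  have hfactor : w g * ∑' h : {h : H // h ≠ 1}, w h = ∑' h, u h := by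
    rw [← ENNReal.tsum_mul_left]
    refine tsum_congr fun h => ?_
    rw [← ENNReal.ofReal_mul (Real.exp_nonneg _), ← Real.exp_add, add_comm, ← mul_add]
  calc ∑' k : ℕ, (w g * ∑' h : {h : H // h ≠ 1}, w h) ^ (k + 1)
      = ∑' p : Σ k : ℕ, {f : Fin (k + 1) → H // ∀ i, f i ≠ 1},
          ∏ i, u ⟨p.2.1 i, p.2.2 i⟩ := by
        simp_rw [hfactor, ← ENNReal.tsum_subtype_fin_pi_prod_eq_pow, ENNReal.tsum_sigma']
    _ ≤ ∑' p : Σ k : ℕ, {f : Fin (k + 1) → H // ∀ i, f i ≠ 1},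
          w (List.ofFn (fun i => ((p.2.1 i : G) * g))).prod :=
        ENNReal.tsum_le_tsum fun p => ENNReal.prod_ofReal_exp_neg_mul_le _ _ hs (htri _ _)
    _ ≤ ∑' γ : G, w γ := ENNReal.tsum_comp_le_tsum_of_injective hinj w

theorem poincare_series_free_product_lower_bound
    (G : Type*) [Group G] (X : Type*) [MetricSpace X]
    [MulAction G X] (hiso : ∀ g : G, Isometry (fun x : X => g • x))
    (o : X) (H : Subgroup G) (g : G)
    (hinj : Function.Injective
      (fun p : Σ k : ℕ, {f : Fin (k + 1) → H // ∀ i, f i ≠ 1} =>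
        (List.ofFn (fun i => ((p.2.1 i : G) * g))).prod))
    (htri : ∀ (k : ℕ) (f : Fin (k + 1) → H),
      dist o ((List.ofFn (fun i => ((f i : G) * g))).prod • o) ≤
        ∑ i : Fin (k + 1), (dist o ((f i : G) • o) + dist o (g • o))) :
    ∀ s : ℝ, 0 ≤ s →
      ∑' k : ℕ,
          (ENNReal.ofReal (Real.exp (-s * dist o (g • o))) *
            ∑' h : {h : H // h ≠ 1},
              ENNReal.ofReal (Real.exp (-s * dist o ((h : G) • o)))) ^ (k + 1)
        ≤ ∑' γ : G, ENNReal.ofReal (Real.exp (-s * dist o (γ • o))) :=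
  poincare_series_free_product_lower_bound_general G X o H g hinj htri
end
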